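/- arXiv:2503.16172 — 3 statements merged into one kernel-verified Lean document; each statement's English description precedes it below -/
import Mathlib

section
/- Let S_k be a sequence of real-valued non-decreasing functions on I = [a,b], and define 𝔩_k[y] = ∫_I |y'(x)|² dx + ∫_I |y(x)|² dS_k(x) for y ∈ W¹₂(I) with y(a) = y(b) = 0. If for every 0 < d ≤ b−a the differences S_k(y) − S_k(x) → +∞ uniformly over pairs x < y in I with y − x = d, then inf{𝔩_k[y] : ‖y‖_{L²(I)} = 1} → +∞ as k → ∞. -/
/-!
Write `y x = ∫ t in a..x, y' t` and `D = ∫ |y'|²`. Cauchy–Schwarz gives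
`‖y t - y s‖² ≤ |t - s| D`, so `y` is continuous (hence `S_k`-measurable) and bounded on `I`.
If `D < C`, take `d` with `4 (b - a) d C < 1`. Since `‖y‖ = 1`, some `x₀` has
`(b - a) |y x₀|² ≥ 1`; the bound `|y x₀|² ≤ (x₀ - a) D` forces `x₀ ≥ a + d`, and the Hölder
estimate keeps `4 (b - a) |y|² ≥ 1` on `(x₀ - d, x₀]`. Hence the Stieltjes term is at least
`(S_k x₀ - S_k (x₀ - d)) / (4 (b - a))`, which exceeds `C` for large `k`.
-/

open MeasureTheory intervalIntegral Filter Set Topology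

lemma sq_intervalIntegral_le_mul {f : ℝ → ℝ} {s t : ℝ} (hst : s ≤ t)
    (hf : IntervalIntegrable f volume s t)
    (hf2 : IntervalIntegrable (fun x => f x ^ 2) volume s t) :
    (∫ x in s..t, f x) ^ 2 ≤ (t - s) * ∫ x in s..t, f x ^ 2 := by
  rcases hst.eq_or_lt with rfl | hst
  · simp
  have hts : 0 < t - s := sub_pos.2 hst
  have jensen := (Even.convexOn_pow even_two).map_set_average_le (continuous_pow 2).continuousOn
    isClosed_univ (by simp [hst]) measure_Ioc_lt_top.ne (by simp) hf.1 hf2.1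
  simp only [setAverage_eq, Real.volume_real_Ioc_of_le hst.le, smul_eq_mul] at jensen
  rw [mul_pow, inv_pow, ← div_eq_inv_mul, ← div_eq_inv_mul,
    div_le_div_iff₀ (by positivity) hts] at jensen
  rw [integral_of_le hst.le, integral_of_le hst.le]
  nlinarith

section Primitive

variable {E : Type*} [NormedAddCommGroup E] [NormedSpace ℝ E] {f : ℝ → E} {a b : ℝ}

lemma norm_integral_sub_integral_sq_le
    (hf2 : IntervalIntegrable (fun x => ‖f x‖ ^ 2) volume a b) {s t : ℝ}
    (has : a ≤ s) (hst : s ≤ t) (htb : t ≤ b) (hft : IntervalIntegrable f volume a t) :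
    ‖(∫ x in a..t, f x) - ∫ x in a..s, f x‖ ^ 2 ≤ (t - s) * ∫ x in a..b, ‖f x‖ ^ 2 := by
  have hfst : IntervalIntegrable f volume s t :=
    hft.mono_set (by rw [uIcc_of_le hst, uIcc_of_le (has.trans hst)]; gcongr)
  have hfas : IntervalIntegrable f volume a s :=
    hft.mono_set (by rw [uIcc_of_le has, uIcc_of_le (has.trans hst)]; gcongr)
  have hf2st : IntervalIntegrable (fun x => ‖f x‖ ^ 2) volume s t :=
    hf2.mono_set (by rw [uIcc_of_le hst, uIcc_of_le (has.trans (hst.trans htb))]; gcongr)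
  rw [integral_interval_sub_left hft hfas]
  calc ‖∫ x in s..t, f x‖ ^ 2 ≤ (∫ x in s..t, ‖f x‖) ^ 2 := by
        gcongr; exact norm_integral_le_integral_norm hst
    _ ≤ (t - s) * ∫ x in s..t, ‖f x‖ ^ 2 := sq_intervalIntegral_le_mul hst hfst.norm hf2st
    _ ≤ (t - s) * ∫ x in a..b, ‖f x‖ ^ 2 := by
        gcongr
        exact integral_mono_interval has hst htb (ae_of_all _ fun x => by positivity) hf2

lemma norm_integral_sq_le (hf2 : IntervalIntegrable (fun x => ‖f x‖ ^ 2) volume a b) {t : ℝ}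
    (hat : a ≤ t) (htb : t ≤ b) :
    ‖∫ x in a..t, f x‖ ^ 2 ≤ (t - a) * ∫ x in a..b, ‖f x‖ ^ 2 := by
  by_cases hft : IntervalIntegrable f volume a t
  · simpa using norm_integral_sub_integral_sq_le hf2 le_rfl hat htb hft
  · rw [integral_undef hft, norm_zero, sq, zero_mul]
    exact mul_nonneg (sub_nonneg.2 hat)
      (intervalIntegral.integral_nonneg (hat.trans htb) fun x _ => by positivity)

lemma continuousOn_primitive_of_sq_intervalIntegrable
    (hf2 : IntervalIntegrable (fun x => ‖f x‖ ^ 2) volume a b) :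
    ContinuousOn (fun x => ∫ t in a..x, f t) {t ∈ Icc a b | IntervalIntegrable f volume a t} := by
  set D := ∫ x in a..b, ‖f x‖ ^ 2
  have hclose : ∀ s ∈ {t ∈ Icc a b | IntervalIntegrable f volume a t},
      ∀ t ∈ {t ∈ Icc a b | IntervalIntegrable f volume a t},
      ‖(∫ x in a..s, f x) - ∫ x in a..t, f x‖ ≤ Real.sqrt (|s - t| * D) := by
    intro s hs t ht
    apply Real.le_sqrt_of_sq_le
    rcases le_total s t with hst | hts
    · rw [norm_sub_rev, abs_of_nonpos (sub_nonpos.2 hst), neg_sub]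
      exact norm_integral_sub_integral_sq_le hf2 hs.1.1 hst ht.1.2 ht.2
    · rw [abs_of_nonneg (sub_nonneg.2 hts)]
      exact norm_integral_sub_integral_sq_le hf2 ht.1.1 hts hs.1.2 hs.2
  intro t ht
  rw [ContinuousWithinAt, tendsto_iff_norm_sub_tendsto_zero]
  refine squeeze_zero' (Eventually.of_forall fun s => norm_nonneg _)
    (eventually_nhdsWithin_of_forall fun s hs => hclose s hs t ht) ?_
  have : Continuous fun s => Real.sqrt (|s - t| * D) := by fun_prop
  simpa using this.continuousWithinAt.tendsto
    (s := {t ∈ Icc a b | IntervalIntegrable f volume a t}) (x := t)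

/- Integrability of `‖f‖²` does not make `f` measurable: off the interval where `f` is integrable
on `[a, t]`, the primitive takes the junk value `0`. -/
lemma aestronglyMeasurable_primitive_of_sq_intervalIntegrable
    (hf2 : IntervalIntegrable (fun x => ‖f x‖ ^ 2) volume a b) (μ : Measure ℝ) :
    AEStronglyMeasurable (fun x => ∫ t in a..x, f t) (μ.restrict (Icc a b)) := by
  set G := {t ∈ Icc a b | IntervalIntegrable f volume a t}
  have hG : MeasurableSet G := by
    refine OrdConnected.measurableSet
      ⟨fun x hx y hy z hz => ⟨⟨hx.1.1.trans hz.1, hz.2.trans hy.1.2⟩, ?_⟩⟩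
    exact hy.2.mono_set (by
      rw [uIcc_of_le (hx.1.1.trans hz.1), uIcc_of_le hy.1.1]; gcongr; exact hz.2)
  rw [← union_sdiff_cancel (sep_subset (Icc a b) _), aestronglyMeasurable_union_iff]
  refine ⟨(continuousOn_primitive_of_sq_intervalIntegrable hf2).aestronglyMeasurable hG, ?_⟩
  refine (aestronglyMeasurable_const (b := (0 : E))).congr <|
    (ae_restrict_iff' (measurableSet_Icc.diff hG)).2 <| ae_of_all _ fun x hx => ?_
  exact (integral_undef fun h => hx.2 ⟨hx.1, h⟩).symm

lemma integrableOn_norm_primitive_sq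
    (hf2 : IntervalIntegrable (fun x => ‖f x‖ ^ 2) volume a b) (μ : Measure ℝ)
    [IsFiniteMeasureOnCompacts μ] :
    IntegrableOn (fun x => ‖∫ t in a..x, f t‖ ^ 2) (Icc a b) μ := by
  refine .of_bound isCompact_Icc.measure_lt_top
    ((aestronglyMeasurable_primitive_of_sq_intervalIntegrable hf2 μ).norm.pow 2)
    ((b - a) * ∫ x in a..b, ‖f x‖ ^ 2) <|
    (ae_restrict_iff' measurableSet_Icc).2 <| ae_of_all _ fun x hx => ?_
  rw [Real.norm_of_nonneg (by positivity)]
  refine (norm_integral_sq_le hf2 hx.1 hx.2).trans ?_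
  gcongr
  · exact intervalIntegral.integral_nonneg (hx.1.trans hx.2) fun x _ => by positivity
  · exact hx.2

lemma exists_forall_le_norm_primitive_sq (hab : a < b)
    (hf2 : IntervalIntegrable (fun x => ‖f x‖ ^ 2) volume a b)
    (hnorm : ∫ x in a..b, ‖∫ t in a..x, f t‖ ^ 2 = 1) {d : ℝ} (hd : 0 < d)
    (hdD : 4 * (b - a) * (d * ∫ x in a..b, ‖f x‖ ^ 2) ≤ 1) :
    ∃ x₀ ∈ Icc (a + d) b, ∀ t ∈ Ioc (x₀ - d) x₀,
      1 ≤ 4 * (b - a) * ‖∫ u in a..t, f u‖ ^ 2 := by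
  set D := ∫ x in a..b, ‖f x‖ ^ 2
  set Y := fun x => ∫ t in a..x, f t
  have hL : 0 < b - a := sub_pos.2 hab
  have hY : IntervalIntegrable (fun x => ‖Y x‖ ^ 2) volume a b := by
    by_contra h
    rw [integral_undef h] at hnorm
    exact zero_ne_one hnorm
  obtain ⟨x₀, hx₀, hpeak⟩ := exists_setAverage_le (by simp [hab]) measure_Ioc_lt_top.ne hY.1
  rw [setAverage_eq, Real.volume_real_Ioc_of_le hab.le, ← integral_of_le hab.le, hnorm,
    smul_eq_mul, mul_one, inv_le_iff_one_le_mul₀' hL] at hpeak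
  have hx₀int : IntervalIntegrable f volume a x₀ := by
    by_contra h
    norm_num [Y, integral_undef h] at hpeak
  have hD0 : 0 ≤ D := intervalIntegral.integral_nonneg hab.le fun x _ => by positivity
  have hx₀d : a + d ≤ x₀ := by
    have hpeak_le : 1 ≤ (x₀ - a) * ((b - a) * D) := by
      nlinarith [norm_integral_sq_le hf2 hx₀.1.le hx₀.2]
    have hLD : 0 < (b - a) * D := by
      by_contra! h
      nlinarith [sub_pos.2 hx₀.1]
    have : 4 * d ≤ x₀ - a := le_of_mul_le_mul_right (by linarith) hLD
    linarith
  refine ⟨x₀, ⟨hx₀d, hx₀.2⟩, fun t ht => ?_⟩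
  have hclose : 4 * (b - a) * ‖Y x₀ - Y t‖ ^ 2 ≤ 1 := by
    have := norm_integral_sub_integral_sq_le hf2 (by linarith [ht.1]) ht.2 hx₀.2 hx₀int
    have : (x₀ - t) * D ≤ d * D := by gcongr; linarith [ht.1]
    calc 4 * (b - a) * ‖Y x₀ - Y t‖ ^ 2 ≤ 4 * (b - a) * (d * D) := by gcongr; linarith
      _ ≤ 1 := hdD
  have htri : ‖Y x₀‖ ^ 2 ≤ 2 * ‖Y t‖ ^ 2 + 2 * ‖Y x₀ - Y t‖ ^ 2 := by
    have := pow_le_pow_left₀ (norm_nonneg _) (norm_le_insert' (Y x₀) (Y t)) 2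
    nlinarith [norm_nonneg (Y t), norm_nonneg (Y x₀ - Y t), sq_nonneg (‖Y t‖ - ‖Y x₀ - Y t‖)]
  nlinarith

lemma exists_measureReal_Ioc_le_setIntegral_norm_primitive_sq (μ : Measure ℝ)
    [IsFiniteMeasureOnCompacts μ] (hab : a < b)
    (hf2 : IntervalIntegrable (fun x => ‖f x‖ ^ 2) volume a b)
    (hnorm : ∫ x in a..b, ‖∫ t in a..x, f t‖ ^ 2 = 1) {d : ℝ} (hd : 0 < d)
    (hdD : 4 * (b - a) * (d * ∫ x in a..b, ‖f x‖ ^ 2) ≤ 1) :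
    ∃ x₀ ∈ Icc (a + d) b, μ.real (Ioc (x₀ - d) x₀) ≤
      4 * (b - a) * ∫ x in Icc a b, ‖∫ t in a..x, f t‖ ^ 2 ∂μ := by
  obtain ⟨x₀, hx₀, hlow⟩ := exists_forall_le_norm_primitive_sq hab hf2 hnorm hd hdD
  have hsub : Ioc (x₀ - d) x₀ ⊆ Icc a b :=
    Ioc_subset_Icc_self.trans (Icc_subset_Icc (by linarith [hx₀.1]) hx₀.2)
  have hint := integrableOn_norm_primitive_sq hf2 μ
  refine ⟨x₀, hx₀, ?_⟩
  calc μ.real (Ioc (x₀ - d) x₀)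
      ≤ ∫ x in Ioc (x₀ - d) x₀, 4 * (b - a) * ‖∫ t in a..x, f t‖ ^ 2 ∂μ := by
        simpa using setIntegral_ge_of_const_le_real measurableSet_Ioc
          ((measure_mono hsub).trans_lt isCompact_Icc.measure_lt_top).ne hlow
          ((hint.mono_set hsub).const_mul _)
    _ = 4 * (b - a) * ∫ x in Ioc (x₀ - d) x₀, ‖∫ t in a..x, f t‖ ^ 2 ∂μ :=
        integral_const_mul _ _
    _ ≤ 4 * (b - a) * ∫ x in Icc a b, ‖∫ t in a..x, f t‖ ^ 2 ∂μ :=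
        mul_le_mul_of_nonneg_left
          (setIntegral_mono_set hint (ae_of_all _ fun x => by positivity) hsub.eventuallyLE)
          (by linarith)

end Primitive

lemma StieltjesFunction.measureReal_Ioc_of_le (S : StieltjesFunction ℝ) {x y : ℝ} (hxy : x ≤ y) :
    S.measure.real (Ioc x y) = S y - S x := by
  rw [measureReal_def, S.measure_Ioc, ENNReal.toReal_ofReal (sub_nonneg.2 (S.mono hxy))]

lemma exists_primitive_sq_integral_eq_one {a b : ℝ} (hab : a < b) :
    ∃ f : ℝ → ℂ, IntervalIntegrable (fun x => ‖f x‖ ^ 2) volume a b ∧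
      (∫ t in a..b, f t) = 0 ∧ ∫ x in a..b, ‖∫ t in a..x, f t‖ ^ 2 = 1 := by
  have hprim : ∀ x, ∫ t in a..x, (2 * t - (a + b)) = (x - a) * (x - b) := by
    intro x
    rw [intervalIntegral.integral_sub (intervalIntegrable_id.const_mul 2)
      intervalIntegrable_const, intervalIntegral.integral_const_mul, integral_id,
      intervalIntegral.integral_const, smul_eq_mul]
    ring
  set I := ∫ x in a..b, ((x - a) * (x - b)) ^ 2
  have hI : 0 < I := by
    refine intervalIntegral_pos_of_pos_on
      ((by fun_prop : Continuous fun x : ℝ => ((x - a) * (x - b)) ^ 2).intervalIntegrable _ _)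
      (fun x hx => ?_) hab
    have : (x - a) * (x - b) < 0 :=
      mul_neg_of_pos_of_neg (by linarith [hx.1]) (by linarith [hx.2])
    nlinarith
  set c := (Real.sqrt I)⁻¹
  have hY : ∀ x, ∫ t in a..x, ((c * (2 * t - (a + b)) : ℝ) : ℂ) =
      ((c * ((x - a) * (x - b)) : ℝ) : ℂ) := by
    intro x
    rw [intervalIntegral.integral_ofReal, intervalIntegral.integral_const_mul, hprim]
  refine ⟨fun t => ((c * (2 * t - (a + b)) : ℝ) : ℂ),
    (by fun_prop : Continuous _).intervalIntegrable _ _, ?_, ?_⟩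
  · rw [hY]; simp
  · simp_rw [hY, Complex.norm_real, Real.norm_eq_abs, sq_abs, mul_pow c]
    rw [intervalIntegral.integral_const_mul, inv_pow, Real.sq_sqrt hI.le, inv_mul_cancel₀ hI.ne']

/-- if the increments of the non-decreasing functions S_k over
subintervals of fixed positive length d of I = [a,b] tend to +∞ uniformly, then
inf{ ∫_I|y'|² + ∫_I|y|² dS_k : y ∈ W̊¹₂(I), ‖y‖_{L²(I)} = 1 } → +∞.
(W̊¹₂(I) is represented via y(x) = ∫_a^x y'(t) dt with ∫_a^b y' = 0.) -/
theorem stieltjes_form_inf_tendsto (a b : ℝ) (hab : a < b) (S : ℕ → StieltjesFunction ℝ)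
    (hS : ∀ d : ℝ, 0 < d → d ≤ b - a → ∀ C : ℝ, ∃ K : ℕ, ∀ k ≥ K,
      ∀ x y : ℝ, a ≤ x → y ≤ b → y - x = d → C ≤ S k y - S k x) :
    Tendsto (fun k : ℕ => sInf {v : ℝ | ∃ y' : ℝ → ℂ,
        IntervalIntegrable (fun x => ‖y' x‖ ^ 2) volume a b ∧
        (∫ t in a..b, y' t) = 0 ∧
        (∫ x in a..b, ‖∫ t in a..x, y' t‖ ^ 2) = 1 ∧
        v = (∫ x in a..b, ‖y' x‖ ^ 2) +
          ∫ x in Set.Icc a b, ‖∫ t in a..x, y' t‖ ^ 2 ∂(S k).measure})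
      atTop atTop := by
  have hL : 0 < b - a := sub_pos.2 hab
  rw [tendsto_atTop]
  intro C
  have hsmall : ∀ᶠ d in 𝓝 (0 : ℝ), d ≤ b - a ∧ 4 * (b - a) * (d * C) < 1 :=
    (eventually_le_nhds hL).and <|
      (by fun_prop : Continuous fun d => 4 * (b - a) * (d * C)).continuousAt.eventually_lt
        continuousAt_const (by simp)
  obtain ⟨d, ⟨hdL, hdC⟩, hd⟩ :=
    ((hsmall.filter_mono nhdsWithin_le_nhds).and self_mem_nhdsWithin).exists (f := 𝓝[>] 0)
  obtain ⟨K, hK⟩ := hS d hd hdL (4 * (b - a) * C)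
  filter_upwards [eventually_ge_atTop K] with k hk
  obtain ⟨w, hw⟩ := exists_primitive_sq_integral_eq_one hab
  refine le_csInf ⟨_, w, hw.1, hw.2.1, hw.2.2, rfl⟩ ?_
  rintro v ⟨y', hsq, -, hnorm, rfl⟩
  have hform : 0 ≤ ∫ x in Icc a b, ‖∫ t in a..x, y' t‖ ^ 2 ∂(S k).measure :=
    setIntegral_nonneg measurableSet_Icc fun x _ => by positivity
  rcases le_or_gt C (∫ x in a..b, ‖y' x‖ ^ 2) with hCD | hDC
  · linarith
  have hD0 : 0 ≤ ∫ x in a..b, ‖y' x‖ ^ 2 :=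
    intervalIntegral.integral_nonneg hab.le fun x _ => by positivity
  have hdD : 4 * (b - a) * (d * ∫ x in a..b, ‖y' x‖ ^ 2) ≤ 1 :=
    ((mul_le_mul_of_nonneg_left (by gcongr) (by positivity)).trans_lt hdC).le
  obtain ⟨x₀, hx₀, hμ⟩ :=
    exists_measureReal_Ioc_le_setIntegral_norm_primitive_sq (S k).measure hab hsq hnorm hd hdD
  rw [(S k).measureReal_Ioc_of_le (by linarith)] at hμ
  have hinc := hK k hk (x₀ - d) x₀ (by linarith [hx₀.1]) hx₀.2 (by ring)
  have := le_of_mul_le_mul_left (hinc.trans hμ) (by positivity)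
  linarith
end

section
/- Let S_k be a sequence of real-valued non-decreasing functions on I = [a,b], and 𝔩_k[y] = ∫_I |y'|² dx + ∫_I |y|² dS_k(x) on W̊¹₂(I). If inf{𝔩_k[y] : ‖y‖_{L²(I)} = 1} → +∞, then for every 0 < d ≤ b−a, S_k(y) − S_k(x) → +∞ uniformly over x < y in I with y − x = d. -/
/-!
Test the form on the tent of height `d / 2` over `[x, y]`, `y - x = d`, normalised in `L²`:
its derivative is `±√(12 / d³)`, so the Dirichlet part equals `12 / d²`, and the tent vanishes
off `(x, y)` and is at most `d / 2` there, so the Stieltjes part is at most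
`(3 / d) (S_k y - S_k x)`. Hence `inf 𝔩_k ≤ 12 / d² + (3 / d) (S_k y - S_k x)` for every such
pair, and the infimum tending to `+∞` forces the increments to `+∞`, uniformly in `x`.
-/

open MeasureTheory intervalIntegral Filter Set

lemma intervalIntegrable_indicator_Ioc_one (p q u v : ℝ) :
    IntervalIntegrable ((Ioc p q).indicator (1 : ℝ → ℝ)) volume u v :=
  ((integrableOn_const (C := (1 : ℝ)) measure_Ioc_lt_top.ne).integrable_indicator
    measurableSet_Ioc).intervalIntegrable

lemma integral_indicator_Ioc_one {a s p q : ℝ} (hap : a ≤ p) (has : a ≤ s) :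
    ∫ t in a..s, (Ioc p q).indicator 1 t = max (min s q - p) 0 := by
  rw [integral_of_le has, integral_indicator_one measurableSet_Ioc,
    measureReal_restrict_apply measurableSet_Ioc, Ioc_inter_Ioc, max_eq_left hap, min_comm,
    Real.volume_real_Ioc]

def tent (x y s : ℝ) : ℝ := max 0 (min (s - x) (y - s))

noncomputable def tentSlope (x y t : ℝ) : ℝ :=
  (Ioc x ((x + y) / 2)).indicator 1 t - (Ioc ((x + y) / 2) y).indicator 1 t

section Tent

variable {x y s : ℝ}

lemma continuous_tent : Continuous (tent x y) := by
  unfold tent; fun_prop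

lemma tent_nonneg : 0 ≤ tent x y s := le_max_left _ _

lemma tent_le (hxy : x ≤ y) : tent x y s ≤ (y - x) / 2 := by
  unfold tent; grind

lemma tent_eq_zero_of_notMem_Ioo (hs : s ∉ Ioo x y) : tent x y s = 0 := by
  unfold tent; grind

lemma tent_of_le_midpoint (hxs : x ≤ s) (hs : s ≤ (x + y) / 2) : tent x y s = s - x := by
  unfold tent; grind

lemma tent_of_midpoint_le (hs : (x + y) / 2 ≤ s) (hsy : s ≤ y) : tent x y s = y - s := by
  unfold tent; grind

lemma tentSlope_sq (t : ℝ) : tentSlope x y t ^ 2 = (Ioc x y).indicator 1 t := by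
  simp only [tentSlope, indicator_apply, mem_Ioc, Pi.one_apply]
  split_ifs <;> grind

end Tent

section Integrals

variable {a b x y : ℝ}

lemma integral_tentSlope (hax : a ≤ x) (hxy : x ≤ y) {s : ℝ} (has : a ≤ s) :
    ∫ t in a..s, tentSlope x y t = tent x y s := by
  simp only [tentSlope]
  rw [integral_sub (intervalIntegrable_indicator_Ioc_one _ _ _ _)
    (intervalIntegrable_indicator_Ioc_one _ _ _ _), integral_indicator_Ioc_one hax has,
    integral_indicator_Ioc_one (by linarith) has, tent]
  grind

lemma integral_tentSlope_sq (hax : a ≤ x) (hxy : x ≤ y) (hyb : y ≤ b) :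
    ∫ t in a..b, tentSlope x y t ^ 2 = y - x := by
  simp only [tentSlope_sq]
  rw [integral_indicator_Ioc_one hax (hax.trans (hxy.trans hyb)), min_eq_right hyb,
    max_eq_left (sub_nonneg.mpr hxy)]

lemma integral_tent_sq (hax : a ≤ x) (hxy : x ≤ y) (hyb : y ≤ b) :
    ∫ s in a..b, tent x y s ^ 2 = (y - x) ^ 3 / 12 := by
  set m := (x + y) / 2 with hm
  have hxm : x ≤ m := by linarith
  have hmy : m ≤ y := by linarith
  have hi : ∀ u v, IntervalIntegrable (fun s => tent x y s ^ 2) volume u v :=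
    fun u v => (continuous_tent.pow 2).intervalIntegrable u v
  have left : ∫ s in a..x, tent x y s ^ 2 = 0 := by
    rw [integral_congr (g := fun _ => 0), intervalIntegral.integral_zero]
    intro s hs
    rw [uIcc_of_le hax] at hs
    simp [tent_eq_zero_of_notMem_Ioo (fun h => h.1.not_ge hs.2)]
  have right : ∫ s in y..b, tent x y s ^ 2 = 0 := by
    rw [integral_congr (g := fun _ => 0), intervalIntegral.integral_zero]
    intro s hs
    rw [uIcc_of_le hyb] at hs
    simp [tent_eq_zero_of_notMem_Ioo (fun h => h.2.not_ge hs.1)]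
  have rising : ∫ s in x..m, tent x y s ^ 2 = ∫ s in x..m, (s - x) ^ 2 := by
    refine integral_congr fun s hs => ?_
    rw [uIcc_of_le hxm] at hs
    simp only [tent_of_le_midpoint hs.1 hs.2]
  have falling : ∫ s in m..y, tent x y s ^ 2 = ∫ s in m..y, (s - y) ^ 2 := by
    refine integral_congr fun s hs => ?_
    rw [uIcc_of_le hmy] at hs
    simp only [tent_of_midpoint_le hs.1 hs.2]
    ring
  rw [← integral_add_adjacent_intervals (hi a x) (hi x b),
    ← integral_add_adjacent_intervals (hi x m) (hi m b),
    ← integral_add_adjacent_intervals (hi m y) (hi y b), left, right, rising, falling,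
    integral_comp_sub_right (· ^ 2), integral_comp_sub_right (· ^ 2), integral_pow, integral_pow]
  ring

lemma setIntegral_tent_sq_le (μ : Measure ℝ) [IsLocallyFiniteMeasure μ] (hxy : x ≤ y) :
    ∫ s in Icc a b, tent x y s ^ 2 ∂μ ≤ ((y - x) / 2) ^ 2 * μ.real (Ioo x y) := by
  set bump := (Ioo x y).indicator fun _ => ((y - x) / 2) ^ 2
  have hle : ∀ s, tent x y s ^ 2 ≤ bump s := by
    intro s
    by_cases hs : s ∈ Ioo x y
    · rw [show bump s = _ from indicator_of_mem hs _]
      exact pow_le_pow_left₀ tent_nonneg (tent_le hxy) 2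
    · simp [bump, indicator_of_notMem hs, tent_eq_zero_of_notMem_Ioo hs]
  have hbump : Integrable bump μ :=
    (integrableOn_const measure_Ioo_lt_top.ne).integrable_indicator measurableSet_Ioo
  calc ∫ s in Icc a b, tent x y s ^ 2 ∂μ
      ≤ ∫ s in Icc a b, bump s ∂μ :=
        setIntegral_mono_on (continuous_tent.pow 2).integrableOn_Icc hbump.integrableOn
          measurableSet_Icc fun s _ => hle s
    _ ≤ ∫ s, bump s ∂μ :=
        setIntegral_le_integral hbump (ae_of_all _ fun s => (sq_nonneg _).trans (hle s))
    _ = ((y - x) / 2) ^ 2 * μ.real (Ioo x y) := by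
        rw [integral_indicator_const _ measurableSet_Ioo, smul_eq_mul, mul_comm]

end Integrals

/-- The values of `𝔩[y]` on the unit sphere of `L²(a, b)`: `y ∈ W̊¹₂(a, b)` is encoded by its
derivative `y'`, with `y x = ∫ t in a..x, y' t`, so `y a = 0` is built in and `y b = 0` reads
`∫ t in a..b, y' t = 0`. -/
def stieltjesFormValues (a b : ℝ) (μ : Measure ℝ) : Set ℝ :=
  {v : ℝ | ∃ y' : ℝ → ℂ,
    IntervalIntegrable (fun x => ‖y' x‖ ^ 2) volume a b ∧
    (∫ t in a..b, y' t) = 0 ∧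
    (∫ x in a..b, ‖∫ t in a..x, y' t‖ ^ 2) = 1 ∧
    v = (∫ x in a..b, ‖y' x‖ ^ 2) + ∫ x in Icc a b, ‖∫ t in a..x, y' t‖ ^ 2 ∂μ}

section FormValues

variable {a b : ℝ} {μ : Measure ℝ}

lemma stieltjesFormValues_bddBelow (hab : a ≤ b) : BddBelow (stieltjesFormValues a b μ) := by
  refine ⟨0, ?_⟩
  rintro v ⟨y', -, -, -, rfl⟩
  exact add_nonneg (integral_nonneg hab fun _ _ => by positivity)
    (setIntegral_nonneg measurableSet_Icc fun _ _ => by positivity)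

lemma mem_stieltjesFormValues_of_real {f F : ℝ → ℝ} (hab : a ≤ b)
    (hf : IntervalIntegrable (fun t => f t ^ 2) volume a b)
    (hF : ∀ x ∈ Icc a b, ∫ t in a..x, f t = F x) (hFb : F b = 0)
    (hF2 : ∫ x in a..b, F x ^ 2 = 1) :
    (∫ t in a..b, f t ^ 2) + ∫ x in Icc a b, F x ^ 2 ∂μ ∈ stieltjesFormValues a b μ := by
  have hnorm : ∀ x ∈ Icc a b, ‖∫ t in a..x, (f t : ℂ)‖ ^ 2 = F x ^ 2 := fun x hx => by
    rw [integral_ofReal, hF x hx, Complex.norm_real, Real.norm_eq_abs, sq_abs]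
  have hnorm' : ∀ x ∈ uIcc a b, ‖∫ t in a..x, (f t : ℂ)‖ ^ 2 = F x ^ 2 := by
    rwa [uIcc_of_le hab]
  refine ⟨fun t => (f t : ℂ), ?_, ?_, ?_, ?_⟩
  · simpa only [Complex.norm_real, Real.norm_eq_abs, sq_abs] using hf
  · rw [integral_ofReal, hF b (right_mem_Icc.mpr hab), hFb, Complex.ofReal_zero]
  · rw [integral_congr hnorm', hF2]
  · simp only [Complex.norm_real, Real.norm_eq_abs, sq_abs]
    rw [setIntegral_congr_fun measurableSet_Icc hnorm]

lemma sInf_stieltjesFormValues_le [IsLocallyFiniteMeasure μ] {x y : ℝ} (hax : a ≤ x) (hxy : x < y)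
    (hyb : y ≤ b) :
    sInf (stieltjesFormValues a b μ) ≤ 12 / (y - x) ^ 2 + 3 / (y - x) * μ.real (Ioo x y) := by
  have hd : 0 < y - x := sub_pos.mpr hxy
  have hab : a ≤ b := hax.trans (hxy.le.trans hyb)
  set c := Real.sqrt (12 / (y - x) ^ 3)
  have hc2 : c ^ 2 = 12 / (y - x) ^ 3 := Real.sq_sqrt (by positivity)
  have hmem := mem_stieltjesFormValues_of_real (μ := μ) (f := fun t => c * tentSlope x y t)
    (F := fun s => c * tent x y s) hab
    (by simpa only [mul_pow, tentSlope_sq] using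
      (intervalIntegrable_indicator_Ioc_one x y a b).const_mul (c ^ 2))
    (fun s hs => by rw [intervalIntegral.integral_const_mul, integral_tentSlope hax hxy.le hs.1])
    (by rw [tent_eq_zero_of_notMem_Ioo (fun h => h.2.not_ge hyb), mul_zero])
    (by
      simp only [mul_pow]
      rw [intervalIntegral.integral_const_mul, integral_tent_sq hax hxy.le hyb, hc2]
      field_simp)
  refine (csInf_le (stieltjesFormValues_bddBelow hab) hmem).trans ?_
  simp only [mul_pow]
  rw [intervalIntegral.integral_const_mul, integral_tentSlope_sq hax hxy.le hyb,
    MeasureTheory.integral_const_mul, hc2]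
  calc _ ≤ 12 / (y - x) ^ 3 * (y - x) +
        12 / (y - x) ^ 3 * (((y - x) / 2) ^ 2 * μ.real (Ioo x y)) := by
        gcongr
        exact setIntegral_tent_sq_le μ hxy.le
    _ = _ := by field_simp; ring

end FormValues

lemma StieltjesFunction.measureReal_Ioo_le (S : StieltjesFunction ℝ) {x y : ℝ} (hxy : x ≤ y) :
    S.measure.real (Ioo x y) ≤ S y - S x := by
  rw [measureReal_def, S.measure_Ioo, ENNReal.toReal_ofReal']
  exact max_le (by linarith [S.mono.leftLim_le (le_refl y)]) (sub_nonneg.mpr (S.mono hxy))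

theorem stieltjes_form_inf_tendsto_converse_general (a b : ℝ)
    (S : ℕ → StieltjesFunction ℝ)
    (hinf : Tendsto (fun k : ℕ => sInf {v : ℝ | ∃ y' : ℝ → ℂ,
        IntervalIntegrable (fun x => ‖y' x‖ ^ 2) volume a b ∧
        (∫ t in a..b, y' t) = 0 ∧
        (∫ x in a..b, ‖∫ t in a..x, y' t‖ ^ 2) = 1 ∧
        v = (∫ x in a..b, ‖y' x‖ ^ 2) +
          ∫ x in Set.Icc a b, ‖∫ t in a..x, y' t‖ ^ 2 ∂(S k).measure})
      atTop atTop) :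
    ∀ d : ℝ, 0 < d → d ≤ b - a → ∀ C : ℝ, ∃ K : ℕ, ∀ k ≥ K,
      ∀ x y : ℝ, a ≤ x → y ≤ b → y - x = d → C ≤ S k y - S k x := by
  intro d hd _ C
  obtain ⟨K, hK⟩ := eventually_atTop.mp (hinf.eventually_ge_atTop (12 / d ^ 2 + 3 / d * C))
  refine ⟨K, fun k hk x y hax hyb hyx => ?_⟩
  have hbound : 12 / d ^ 2 + 3 / d * C ≤ 12 / d ^ 2 + 3 / d * (S k).measure.real (Ioo x y) :=
    hyx ▸ (hK k hk).trans (sInf_stieltjesFormValues_le hax (by linarith) hyb)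
  calc C ≤ (S k).measure.real (Ioo x y) :=
        le_of_mul_le_mul_left (by linarith) (div_pos three_pos hd)
    _ ≤ S k y - S k x := (S k).measureReal_Ioo_le (by linarith)

/-- converse: if
inf{ ∫_I|y'|² + ∫_I|y|² dS_k : y ∈ W̊¹₂(I), ‖y‖_{L²(I)} = 1 } → +∞, then for
every 0 < d ≤ b − a the increments S_k(y) − S_k(x) over pairs with y − x = d
tend to +∞ uniformly. -/
theorem stieltjes_form_inf_tendsto_converse (a b : ℝ) (hab : a < b)
    (S : ℕ → StieltjesFunction ℝ)
    (hinf : Tendsto (fun k : ℕ => sInf {v : ℝ | ∃ y' : ℝ → ℂ,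
        IntervalIntegrable (fun x => ‖y' x‖ ^ 2) volume a b ∧
        (∫ t in a..b, y' t) = 0 ∧
        (∫ x in a..b, ‖∫ t in a..x, y' t‖ ^ 2) = 1 ∧
        v = (∫ x in a..b, ‖y' x‖ ^ 2) +
          ∫ x in Set.Icc a b, ‖∫ t in a..x, y' t‖ ^ 2 ∂(S k).measure})
      atTop atTop) :
    ∀ d : ℝ, 0 < d → d ≤ b - a → ∀ C : ℝ, ∃ K : ℕ, ∀ k ≥ K,
      ∀ x y : ℝ, a ≤ x → y ≤ b → y - x = d → C ≤ S k y - S k x :=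
  stieltjes_form_inf_tendsto_converse_general a b S hinf
end

section
/- Let s ∈ L²[0,a] and ψ(x) = exp(∫ₓ^a conj(s(t)) dt), the solution of ψ' + conj(s) ψ = 0 with ψ(a) = 1. Then for every δ > 0 and A ∈ ℂ there exists an absolutely continuous function ω on [0,a] with ω(0) = A, ω(a) = 0, ∫₀^a ω(x) conj(ψ(x)) dx = 0, and ‖ω‖_{L²[0,a]} < δ. -/
/-! The correction is `ω = T + c • g`. The polynomial `T x = (1 - x / a) ^ n • A` has the right
boundary values, and by dominated convergence both its `L²` norm and its pairing with `ψ̄` tend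
to `0` as `n → ∞`. Since `ψ` is an exponential it never vanishes, so by the fundamental lemma of
the calculus of variations some smooth `g` supported in `(0, a)` has `∫ g ψ̄ ≠ 0`; the coefficient
`c = -∫ T ψ̄ / ∫ g ψ̄` restores orthogonality and also tends to `0`. -/

open MeasureTheory intervalIntegral Filter Topology Set
open scoped Interval

open scoped ContDiff in
theorem exists_contDiff_vanishing_integral_smul_ne_zero {E : Type*} [NormedAddCommGroup E]
    [NormedSpace ℝ E] [CompleteSpace E] {a b : ℝ} (hab : a ≤ b) {f : ℝ → E}
    (hf : IntervalIntegrable f volume a b) (hf0 : ¬ ∀ᵐ x, x ∈ Ioo a b → f x = 0) :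
    ∃ g : ℝ → ℝ, ContDiff ℝ ∞ g ∧ g a = 0 ∧ g b = 0 ∧ ∫ x in a..b, g x • f x ≠ 0 := by
  contrapose! hf0
  refine isOpen_Ioo.ae_eq_zero_of_integral_contDiff_smul_eq_zero
    ((hf.def'.mono_set (uIoc_of_le hab ▸ Ioo_subset_Ioc_self)).locallyIntegrableOn) ?_
  intro g hg _ hgU
  have hg0 : ∀ x ∉ Ioo a b, g x = 0 := fun x hx => image_eq_zero_of_notMem_tsupport (hx <| hgU ·)
  rw [← setIntegral_eq_integral_of_forall_compl_eq_zero (s := Ioc a b)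
    (fun x hx => by rw [hg0 x (hx <| Ioo_subset_Ioc_self ·), zero_smul]),
    ← integral_of_le hab]
  exact hf0 g hg (hg0 a (by simp)) (hg0 b (by simp))

theorem tendsto_intervalIntegral_pow_smul_of_abs_lt_one {E : Type*} [NormedAddCommGroup E]
    [NormedSpace ℝ E] {a b : ℝ} {ρ : ℝ → ℝ} {f : ℝ → E} (hρ : Continuous ρ)
    (hρ1 : ∀ x ∈ Ι a b, |ρ x| < 1) (hf : IntervalIntegrable f volume a b) :
    Tendsto (fun n : ℕ => ∫ x in a..b, ρ x ^ n • f x) atTop (𝓝 0) := by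
  have hlim : ∀ x ∈ Ι a b, Tendsto (fun n : ℕ => ρ x ^ n • f x) atTop (𝓝 0) := fun x hx => by
    simpa using (tendsto_pow_atTop_nhds_zero_of_abs_lt_one (hρ1 x hx)).smul_const (f x)
  simpa using tendsto_integral_filter_of_dominated_convergence (F := fun n x => ρ x ^ n • f x)
    (fun x => ‖f x‖)
    (Eventually.of_forall fun n => ((hρ.pow n).aestronglyMeasurable).smul hf.def'.1)
    (Eventually.of_forall fun n => Eventually.of_forall fun x hx => by
      simp only [norm_smul, norm_pow, Real.norm_eq_abs]
      exact mul_le_of_le_one_left (norm_nonneg _) (pow_le_one₀ (abs_nonneg _) (hρ1 x hx).le))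
    hf.norm (Eventually.of_forall hlim)

theorem norm_add_sq_le {E : Type*} [SeminormedAddCommGroup E] (x y : E) :
    ‖x + y‖ ^ 2 ≤ 2 * ‖x‖ ^ 2 + 2 * ‖y‖ ^ 2 := by
  nlinarith [norm_add_le x y, norm_nonneg (x + y), sq_nonneg (‖x‖ - ‖y‖)]

theorem tendsto_integral_norm_add_smul_sq {𝕜 E : Type*} [NormedField 𝕜] [NormedAddCommGroup E]
    [NormedSpace 𝕜 E] {a b : ℝ} (hab : a ≤ b) {u : ℕ → ℝ → E} {v : ℝ → E} {c : ℕ → 𝕜}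
    (hu : ∀ n, Continuous (u n)) (hv : Continuous v)
    (hu0 : Tendsto (fun n => ∫ x in a..b, ‖u n x‖ ^ 2) atTop (𝓝 0))
    (hc : Tendsto c atTop (𝓝 0)) :
    Tendsto (fun n => ∫ x in a..b, ‖u n x + c n • v x‖ ^ 2) atTop (𝓝 0) := by
  have hbound : Tendsto (fun n => 2 * (∫ x in a..b, ‖u n x‖ ^ 2)
      + 2 * ‖c n‖ ^ 2 * ∫ x in a..b, ‖v x‖ ^ 2) atTop (𝓝 0) := by
    simpa using (hu0.const_mul 2).add (((hc.norm.pow 2).const_mul 2).mul_const _)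
  refine squeeze_zero (fun n => integral_nonneg hab fun x _ => by positivity) (fun n => ?_) hbound
  have hu2 : IntervalIntegrable (fun x => ‖u n x‖ ^ 2) volume a b :=
    ((hu n).norm.pow 2).intervalIntegrable a b
  have hv2 : IntervalIntegrable (fun x => ‖v x‖ ^ 2) volume a b :=
    (hv.norm.pow 2).intervalIntegrable a b
  calc ∫ x in a..b, ‖u n x + c n • v x‖ ^ 2
      ≤ ∫ x in a..b, 2 * ‖u n x‖ ^ 2 + 2 * ‖c n‖ ^ 2 * ‖v x‖ ^ 2 := by
        refine integral_mono_on hab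
          ((((hu n).add (continuous_const.smul hv)).norm.pow 2).intervalIntegrable a b)
          ((hu2.const_mul 2).add (hv2.const_mul _)) fun x _ => ?_
        simpa [norm_smul, mul_pow, mul_assoc] using norm_add_sq_le (u n x) (c n • v x)
    _ = 2 * (∫ x in a..b, ‖u n x‖ ^ 2) + 2 * ‖c n‖ ^ 2 * ∫ x in a..b, ‖v x‖ ^ 2 := by
        rw [integral_add (hu2.const_mul 2) (hv2.const_mul _), intervalIntegral.integral_const_mul,
          intervalIntegral.integral_const_mul]

theorem exists_contDiff_orthogonal_integral_norm_sq_lt {a : ℝ} (ha : 0 < a) {φ : ℝ → ℂ}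
    (hφ : IntervalIntegrable φ volume 0 a) (hφ0 : ¬ ∀ᵐ x, x ∈ Ioo 0 a → φ x = 0) (A : ℂ)
    {δ : ℝ} (hδ : 0 < δ) :
    ∃ ω : ℝ → ℂ, ContDiff ℝ 1 ω ∧ ω 0 = A ∧ ω a = 0 ∧ ∫ x in 0..a, ω x * φ x = 0 ∧
      ∫ x in 0..a, ‖ω x‖ ^ 2 < δ := by
  obtain ⟨g, hg, hg0, hga, hL⟩ := exists_contDiff_vanishing_integral_smul_ne_zero ha.le hφ hφ0
  set L := ∫ x in 0..a, g x • φ x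
  set ρ : ℝ → ℝ := fun x => 1 - x / a
  have hρc : Continuous ρ := by fun_prop
  have hρ : ∀ x ∈ Ι 0 a, |ρ x| < 1 := fun x hx => by
    rw [uIoc_of_le ha.le] at hx
    have : x / a ≤ 1 := (div_le_one ha).2 hx.2
    have := div_pos hx.1 ha
    rw [abs_lt]
    constructor <;> linarith
  set T : ℕ → ℝ → ℂ := fun n x => ρ x ^ n • A
  set c : ℕ → ℂ := fun n => -(∫ x in 0..a, T n x * φ x) / L
  have hTφ : Tendsto (fun n => ∫ x in 0..a, T n x * φ x) atTop (𝓝 0) := by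
    simpa [T, mul_assoc] using
      tendsto_intervalIntegral_pow_smul_of_abs_lt_one hρc hρ (hφ.const_mul A)
  have hT2 : Tendsto (fun n => ∫ x in 0..a, ‖T n x‖ ^ 2) atTop (𝓝 0) := by
    have hρ2 : ∀ x ∈ Ι 0 a, |ρ x ^ 2| < 1 := fun x hx => by
      simpa [abs_pow] using pow_lt_one₀ (abs_nonneg _) (hρ x hx) two_ne_zero
    refine (tendsto_intervalIntegral_pow_smul_of_abs_lt_one (hρc.pow 2) hρ2
      (intervalIntegrable_const (c := ‖A‖ ^ 2))).congr fun n => integral_congr fun x _ => ?_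
    simp only [T, norm_smul, norm_pow, Real.norm_eq_abs, mul_pow, ← pow_mul, smul_eq_mul]
    rw [Pi.pow_apply, pow_mul', sq_abs]
  have hc : Tendsto c atTop (𝓝 0) := by simpa using hTφ.neg.div_const L
  -- `n ≠ 0` makes `T n a = 0 ^ n • A` vanish.
  obtain ⟨n, hn, hn0⟩ := (((tendsto_integral_norm_add_smul_sq ha.le (fun n => by fun_prop)
    (Complex.continuous_ofReal.comp hg.continuous) hT2 hc).eventually (gt_mem_nhds hδ)).and
    (eventually_ne_atTop 0)).exists
  refine ⟨fun x => T n x + c n • (g x : ℂ),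
    by have hgC : ContDiff ℝ 1 (fun x => (g x : ℂ)) :=
         Complex.ofRealCLM.contDiff.comp (hg.of_le (mod_cast le_top))
       fun_prop,
    by simp [T, ρ, hg0], by simp [T, ρ, hga, ha.ne', hn0], ?_, hn⟩
  have hTφi : IntervalIntegrable (fun x => T n x * φ x) volume 0 a :=
    hφ.continuousOn_mul (by fun_prop : Continuous (T n)).continuousOn
  have hgφi : IntervalIntegrable (fun x => g x • φ x) volume 0 a :=
    hφ.continuousOn_mul (Complex.continuous_ofReal.comp hg.continuous).continuousOn
  calc ∫ x in 0..a, (T n x + c n • (g x : ℂ)) * φ x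
      = (∫ x in 0..a, T n x * φ x) + c n * L := by
        simp_rw [add_mul, smul_eq_mul, mul_assoc, ← Complex.real_smul]
        rw [integral_add hTφi (hgφi.const_mul (c n)), intervalIntegral.integral_const_mul]
    _ = 0 := by simp [c, hL]

theorem small_orthogonal_correction_general (a : ℝ) (ha : 0 < a) (s : ℝ → ℂ)
    (hs1 : IntegrableOn s (Set.Icc 0 a))
    (ψ : ℝ → ℂ) (hψ : ∀ x, ψ x = Complex.exp (∫ t in x..a, (starRingEnd ℂ) (s t)))
    (δ : ℝ) (hδ : 0 < δ) (A : ℂ) :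
    ∃ ω ω' : ℝ → ℂ,
      IntervalIntegrable ω' volume 0 a ∧
      (∀ x ∈ Set.Icc (0:ℝ) a, ω x = A + ∫ t in (0:ℝ)..x, ω' t) ∧
      ω 0 = A ∧ ω a = 0 ∧
      (∫ x in (0:ℝ)..a, ω x * (starRingEnd ℂ) (ψ x)) = 0 ∧
      Real.sqrt (∫ x in (0:ℝ)..a, ‖ω x‖ ^ 2) < δ := by
  have hψc : ContinuousOn ψ [[0, a]] := by
    have hs : IntegrableOn (fun t => (starRingEnd ℂ) (s t)) [[0, a]] := by
      rw [uIcc_of_le ha.le]; exact Complex.conjCLE.toContinuousLinearMap.integrable_comp hs1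
    exact (Complex.continuous_exp.comp_continuousOn (continuousOn_primitive_interval_left hs)).congr
      fun x _ => hψ x
  have hφ0 : ¬ ∀ᵐ x, x ∈ Ioo 0 a → (starRingEnd ℂ) (ψ x) = 0 := fun h => by
    have hvol : volume (Ioo 0 a) = 0 := by
      simpa only [hψ, map_eq_zero, Complex.exp_ne_zero, imp_false, ae_iff, not_not,
        ofPred_mem_eq] using h
    exact ((Measure.measure_Ioo_pos volume).2 ha).ne' hvol
  obtain ⟨ω, hω, hω0, hωa, horth, hsmall⟩ := exists_contDiff_orthogonal_integral_norm_sq_lt ha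
    (Complex.continuous_conj.comp_continuousOn hψc).intervalIntegrable hφ0 A (pow_pos hδ 2)
  refine ⟨ω, deriv ω, (hω.continuous_deriv le_rfl).intervalIntegrable 0 a, fun x _ => ?_, hω0,
    hωa, horth, (Real.sqrt_lt' hδ).2 hsmall⟩
  rw [integral_deriv_eq_sub (fun y _ => hω.differentiable one_ne_zero y)
    ((hω.continuous_deriv le_rfl).intervalIntegrable 0 x), hω0, add_sub_cancel]

/-- for s ∈ L²[0,a] and ψ(x) = exp(∫ₓ^a s̄), for every δ > 0 and
A ∈ ℂ there is an absolutely continuous ω on [0,a] with ω(0) = A, ω(a) = 0,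
∫₀^a ω ψ̄ = 0 and ‖ω‖_{L²[0,a]} < δ. -/
theorem small_orthogonal_correction (a : ℝ) (ha : 0 < a) (s : ℝ → ℂ)
    (hs2 : IntegrableOn (fun x => ‖s x‖ ^ 2) (Set.Icc 0 a))
    (hs1 : IntegrableOn s (Set.Icc 0 a))
    (ψ : ℝ → ℂ) (hψ : ∀ x, ψ x = Complex.exp (∫ t in x..a, (starRingEnd ℂ) (s t)))
    (δ : ℝ) (hδ : 0 < δ) (A : ℂ) :
    ∃ ω ω' : ℝ → ℂ,
      IntervalIntegrable ω' volume 0 a ∧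
      (∀ x ∈ Set.Icc (0:ℝ) a, ω x = A + ∫ t in (0:ℝ)..x, ω' t) ∧
      ω 0 = A ∧ ω a = 0 ∧
      (∫ x in (0:ℝ)..a, ω x * (starRingEnd ℂ) (ψ x)) = 0 ∧
      Real.sqrt (∫ x in (0:ℝ)..a, ‖ω x‖ ^ 2) < δ :=
  small_orthogonal_correction_general a ha s hs1 ψ hψ δ hδ A
end
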